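/- Agreement at first-order types: If FO(A) holds, then for every index k, V[[A]]^L_k = V[[A]]^P_k. -/

import Mathlib

/-- Consistency classifiers: the logical (L) and programmatic (P) fragments. -/
inductive Frag : Type
  | L | P
deriving DecidableEq, Repr

/-- Types, with de Bruijn type variables for recursive types. -/
inductive Ty : Type
  | unit : Ty
  | arrow : Ty → Frag → Ty → Ty       -- A →^θ B
  | sum : Ty → Ty → Ty                -- A + B
  | at_ : Ty → Frag → Ty              -- A @ θ
  | tvar : ℕ → Ty                     -- α
  | mu : Ty → Ty                      -- μα. A  (binds one type variable)
deriving DecidableEq, Repr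

namespace Ty

def size : Ty → ℕ
  | unit => 1
  | arrow A _ B => A.size + B.size + 1
  | sum A B => A.size + B.size + 1
  | at_ A _ => A.size + 1
  | tvar _ => 1
  | mu A => A.size + 1

def rename (ρ : ℕ → ℕ) : Ty → Ty
  | unit => unit
  | arrow A θ B => arrow (A.rename ρ) θ (B.rename ρ)
  | sum A B => sum (A.rename ρ) (B.rename ρ)
  | at_ A θ => at_ (A.rename ρ) θ
  | tvar n => tvar (ρ n)
  | mu A => mu (A.rename (fun n => match n with | 0 => 0 | n+1 => ρ n + 1))

def subst (σ : ℕ → Ty) : Ty → Ty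
  | unit => unit
  | arrow A θ B => arrow (A.subst σ) θ (B.subst σ)
  | sum A B => sum (A.subst σ) (B.subst σ)
  | at_ A θ => at_ (A.subst σ) θ
  | tvar n => σ n
  | mu A => mu (A.subst (fun n => match n with | 0 => tvar 0 | n+1 => (σ n).rename Nat.succ))

end Ty

/-- [B/α]A : substitute B for the outermost type variable of A. -/
def tsubst0 (B A : Ty) : Ty := A.subst (fun n => match n with | 0 => B | n+1 => .tvar n)

/-- Terms, with de Bruijn term variables.  `lam` binds one variable (x);
    `rec` binds two: index 0 is x, index 1 is f.  `unbox` and the branches of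
    `case` bind one variable. -/
inductive Tm : Type
  | var : ℕ → Tm
  | lam : Tm → Tm                     -- λx. a
  | recc : Tm → Tm                     -- rec f x. a
  | app : Tm → Tm → Tm
  | box : Tm → Tm
  | unbox : Tm → Tm → Tm              -- unbox x = a in b
  | unit : Tm
  | inl : Tm → Tm
  | inr : Tm → Tm
  | case : Tm → Tm → Tm → Tm          -- case a of {inl x ⇒ b1 ; inr x ⇒ b2}
  | roll : Tm → Tm
  | unroll : Tm → Tm
deriving DecidableEq, Repr

namespace Tm

def liftR (ρ : ℕ → ℕ) : ℕ → ℕ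
  | 0 => 0
  | n+1 => ρ n + 1

def rename (ρ : ℕ → ℕ) : Tm → Tm
  | var n => var (ρ n)
  | lam a => lam (a.rename (liftR ρ))
  | recc a => recc (a.rename (liftR (liftR ρ)))
  | app a b => app (a.rename ρ) (b.rename ρ)
  | box a => box (a.rename ρ)
  | unbox a b => unbox (a.rename ρ) (b.rename (liftR ρ))
  | unit => unit
  | inl a => inl (a.rename ρ)
  | inr a => inr (a.rename ρ)
  | case a b c => case (a.rename ρ) (b.rename (liftR ρ)) (c.rename (liftR ρ))
  | roll a => roll (a.rename ρ)
  | unroll a => unroll (a.rename ρ)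

def liftS (σ : ℕ → Tm) : ℕ → Tm
  | 0 => var 0
  | n+1 => (σ n).rename Nat.succ

def subst (σ : ℕ → Tm) : Tm → Tm
  | var n => σ n
  | lam a => lam (a.subst (liftS σ))
  | recc a => recc (a.subst (liftS (liftS σ)))
  | app a b => app (a.subst σ) (b.subst σ)
  | box a => box (a.subst σ)
  | unbox a b => unbox (a.subst σ) (b.subst (liftS σ))
  | unit => unit
  | inl a => inl (a.subst σ)
  | inr a => inr (a.subst σ)
  | case a b c => case (a.subst σ) (b.subst (liftS σ)) (c.subst (liftS σ))
  | roll a => roll (a.subst σ)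
  | unroll a => unroll (a.subst σ)

end Tm

/-- [v/x]a : substitute v for the outermost term variable of a. -/
def subst1 (a v : Tm) : Tm := a.subst (fun n => match n with | 0 => v | n+1 => .var n)

/-- [v/x][w/f]a : substitute v for index 0 (x) and w for index 1 (f) in a. -/
def subst2 (a v w : Tm) : Tm :=
  a.subst (fun n => match n with | 0 => v | 1 => w | n+2 => .var n)

/-- Values. -/
inductive IsValue : Tm → Prop
  | var (n : ℕ) : IsValue (.var n)
  | unit : IsValue .unit
  | inl {v} : IsValue v → IsValue (.inl v)
  | inr {v} : IsValue v → IsValue (.inr v)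
  | lam (a : Tm) : IsValue (.lam a)
  | recc (a : Tm) : IsValue (.recc a)
  | box {v} : IsValue v → IsValue (.box v)
  | roll {v} : IsValue v → IsValue (.roll v)

/-- First-order types. -/
inductive FO : Ty → Prop
  | unit : FO .unit
  | sum {A B} : FO A → FO B → FO (.sum A B)
  | at_ (A : Ty) (θ : Frag) : FO (.at_ A θ)

/-- Typing contexts: each variable is tagged with a fragment. -/
abbrev Ctx := List (Frag × Ty)

/-- The typing judgement Γ ⊢^θ a : A. -/
inductive Typing : Ctx → Frag → Tm → Ty → Prop
  | tvar {Γ θ A n} : Γ[n]? = some (θ, A) → Typing Γ θ (.var n) A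
  | tlam {Γ θ' A B a} :
      Typing ((θ', A) :: Γ) .L a B →
      Typing Γ .L (.lam a) (.arrow A θ' B)
  | trec {Γ θ' A B a} :
      Typing ((θ', A) :: (.P, .arrow A θ' B) :: Γ) .P a B →
      Typing Γ .P (.recc a) (.arrow A θ' B)
  | tboxP {Γ θ a A} :
      Typing Γ θ a A → Typing Γ .P (.box a) (.at_ A θ)
  | tboxL {Γ θ a A} :
      Typing Γ .L a A → Typing Γ .L (.box a) (.at_ A θ)
  | tboxLV {Γ v A} :
      IsValue v → Typing Γ .P v A → Typing Γ .L (.box v) (.at_ A .P)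
  | tunbox {Γ θ θ' a b A B} :
      Typing Γ θ a (.at_ A θ') →
      Typing ((θ', A) :: Γ) θ b B →
      Typing Γ θ (.unbox a b) B
  | tapp {Γ θ θ' a b A B} :
      Typing Γ θ a (.arrow A θ' B) →
      Typing Γ θ (.box b) (.at_ A θ') →
      Typing Γ θ (.app a b) B
  | tunit {Γ θ} : Typing Γ θ .unit .unit
  | tsub {Γ a A} : Typing Γ .L a A → Typing Γ .P a A
  | tfoval {Γ v A} :
      IsValue v → FO A → Typing Γ .P v A → Typing Γ .L v A
  | tinl {Γ θ a A B} : Typing Γ θ a A → Typing Γ θ (.inl a) (.sum A B)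
  | tinr {Γ θ a A B} : Typing Γ θ a B → Typing Γ θ (.inr a) (.sum A B)
  | tcase {Γ θ θ' a b1 b2 A B C} :
      Typing Γ θ (.box a) (.at_ (.sum A B) θ') →
      Typing ((θ', A) :: Γ) θ b1 C →
      Typing ((θ', B) :: Γ) θ b2 C →
      Typing Γ θ (.case a b1 b2) C
  | troll {Γ a A} :
      Typing Γ .P a (tsubst0 (.mu A) A) →
      Typing Γ .P (.roll a) (.mu A)
  | tunroll {Γ a A} :
      Typing Γ .P a (.mu A) →
      Typing Γ .P (.unroll a) (tsubst0 (.mu A) A)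

/-- Call-by-value small-step reduction a ⇝ b. -/
inductive Step : Tm → Tm → Prop
  | beta {a v} : IsValue v → Step (.app (.lam a) v) (subst1 a v)
  | betaRec {a v} : IsValue v → Step (.app (.recc a) v) (subst2 a v (.recc a))
  | unbox {v b} : IsValue v → Step (.unbox (.box v) b) (subst1 b v)
  | caseL {v b1 b2} : IsValue v → Step (.case (.inl v) b1 b2) (subst1 b1 v)
  | caseR {v b1 b2} : IsValue v → Step (.case (.inr v) b1 b2) (subst1 b2 v)
  | unroll {v} : IsValue v → Step (.unroll (.roll v)) v
  | app1 {a a' b} : Step a a' → Step (.app a b) (.app a' b)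
  | app2 {v b b'} : IsValue v → Step b b' → Step (.app v b) (.app v b')
  | inl {a a'} : Step a a' → Step (.inl a) (.inl a')
  | inr {a a'} : Step a a' → Step (.inr a) (.inr a')
  | caseCtx {a a' b1 b2} : Step a a' → Step (.case a b1 b2) (.case a' b1 b2)
  | box {a a'} : Step a a' → Step (.box a) (.box a')
  | unbox1 {a a' b} : Step a a' → Step (.unbox a b) (.unbox a' b)
  | roll {a a'} : Step a a' → Step (.roll a) (.roll a')
  | unrollCtx {a a'} : Step a a' → Step (.unroll a) (.unroll a')

/-- Indexed multi-step reduction a ⇝^n b. -/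
inductive StepN : ℕ → Tm → Tm → Prop
  | refl (a : Tm) : StepN 0 a a
  | step {n a b c} : Step a b → StepN n b c → StepN (n+1) a c

/-- Multi-step reduction a ⇝* b. -/
inductive StepStar : Tm → Tm → Prop
  | refl (a : Tm) : StepStar a a
  | step {a b c} : Step a b → StepStar b c → StepStar a c

/-- The step-indexed value interpretation V[[A]]^θ_k.
    (The computational interpretation C[[·]] is inlined in the function-type
    and recursive-type cases; see `Cint` below.) -/
def Vint (k : ℕ) (θ : Frag) (A : Ty) : Set Tm :=
  match A, θ with
  | .unit, _ => {Tm.unit}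
  | .sum A B, θ =>
      {t | (∃ v, t = Tm.inl v ∧ v ∈ Vint k θ A) ∨ (∃ v, t = Tm.inr v ∧ v ∈ Vint k θ B)}
  | .at_ A θ', _ => {t | ∃ v, t = Tm.box v ∧ v ∈ Vint k θ' A}
  | .arrow A θ' B, .L =>
      {t | ∃ a, t = Tm.lam a ∧ Typing [] .L (Tm.lam a) (.arrow A θ' B) ∧
        ∀ j, j ≤ k → ∀ v, v ∈ Vint j θ' A →
          Typing [] .L (subst1 a v) B ∧
          ∃ w, StepStar (subst1 a v) w ∧ IsValue w ∧ w ∈ Vint j .L B}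
  | .arrow A θ' B, .P =>
      {t | ∃ a, t = Tm.recc a ∧ Typing [] .P (Tm.recc a) (.arrow A θ' B) ∧
        ∀ j, j < k → ∀ v, v ∈ Vint j θ' A →
          Typing [] .P (subst2 a v (Tm.recc a)) B ∧
          ∀ i, i ≤ j → ∀ w, StepN i (subst2 a v (Tm.recc a)) w → IsValue w →
            w ∈ Vint (j - i) .P B}
  | .mu _, .L => ∅
  | .mu A, .P =>
      {t | ∃ v, t = Tm.roll v ∧ Typing [] .P (Tm.roll v) (.mu A) ∧
        ∀ j, j < k → v ∈ Vint j .P (tsubst0 (.mu A) A)}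
  | .tvar _, _ => ∅
termination_by (k, A.size)
decreasing_by
  all_goals simp only [Prod.lex_def, Ty.size, true_and, eq_self_iff_true]
  all_goals omega

/-- The step-indexed computational interpretation C[[A]]^θ_k. -/
def Cint (k : ℕ) (θ : Frag) (A : Ty) : Set Tm :=
  match θ with
  | .P => {a | Typing [] .P a A ∧
      ∀ j, j ≤ k → ∀ v, StepN j a v → IsValue v → v ∈ Vint (k - j) .P A}
  | .L => {a | Typing [] .L a A ∧
      ∃ v, StepStar a v ∧ IsValue v ∧ v ∈ Vint k .L A}

/-- The logical and programmatic value interpretations agree at first-order types. -/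
theorem fo_agreement {A : Ty} (h : FO A) (k : ℕ) :
    Vint k .L A = Vint k .P A := by
  induction h with
  | unit | at_ => unfold Vint; rfl
  | sum _ _ ihA ihB => unfold Vint; rw [ihA, ihB]
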